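/- arXiv:math/0005099 — 4 statements merged into one kernel-verified Lean document; each statement's English description precedes it below -/
import Mathlib

section
/- An abelian group Γ admits an order P (a subset with P + P ⊆ P, P ∪ (−P) = Γ, and P ∩ (−P) = {0}) if and only if Γ is torsion-free. -/
open Pointwise

/-- The Mathlib (Dec 2024) definition, removed since: an additive monoid is torsion-free
if no nonzero element has finite additive order. -/
def AddMonoid.IsTorsionFree (G : Type*) [AddMonoid G] : Prop :=
  ∀ g : G, g ≠ 0 → ¬IsOfFinAddOrder g

/-!
An order `P` is the same thing as the cone of non-negative elements of a translation-invariant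
linear order on `Γ`, and linearly ordered groups are torsion-free. Conversely, a torsion-free `Γ`
embeds into its divisible hull, a `ℚ`-vector space, hence into some `ι →₀ ℚ`; choosing a linear
order on `ι`, the lexicographic order on `ι →₀ ℚ` is translation-invariant, and its non-negative
cone pulls back to an order on `Γ`.
-/

section

variable {Γ G : Type*} [AddCommGroup Γ] [AddCommGroup G]

def IsMaxCone (P : Set Γ) : Prop :=
  P + P ⊆ P ∧ P ∪ -P = Set.univ ∧ P ∩ -P = {0}

namespace IsMaxCone

theorem mk' {P : Set Γ} (add_mem : ∀ a ∈ P, ∀ b ∈ P, a + b ∈ P)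
    (mem_or_neg_mem : ∀ a, a ∈ P ∨ -a ∈ P) (eq_zero : ∀ a ∈ P, -a ∈ P → a = 0) :
    IsMaxCone P := by
  refine ⟨?_, Set.eq_univ_of_forall mem_or_neg_mem, ?_⟩
  · rintro _ ⟨a, ha, b, hb, rfl⟩
    exact add_mem a ha b hb
  · refine subset_antisymm (fun a ha => eq_zero a ha.1 ha.2) ?_
    rintro _ rfl
    have h0 : (0 : Γ) ∈ P := by simpa using mem_or_neg_mem 0
    exact ⟨h0, by simpa using h0⟩

variable {P : Set Γ} (hP : IsMaxCone P)
include hP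

theorem zero_mem : (0 : Γ) ∈ P := (hP.2.2.ge rfl).1

theorem add_mem {a b : Γ} (ha : a ∈ P) (hb : b ∈ P) : a + b ∈ P :=
  hP.1 (Set.add_mem_add ha hb)

theorem mem_or_neg_mem (a : Γ) : a ∈ P ∨ -a ∈ P :=
  hP.2.1.ge (Set.mem_univ a)

theorem eq_zero_of_mem_of_neg_mem {a : Γ} (ha : a ∈ P) (ha' : -a ∈ P) : a = 0 :=
  hP.2.2.le ⟨ha, ha'⟩

def toAddGroupCone : AddGroupCone Γ where
  carrier := P
  add_mem' := hP.add_mem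
  zero_mem' := hP.zero_mem
  eq_zero_of_mem_of_neg_mem' := hP.eq_zero_of_mem_of_neg_mem

instance : HasMemOrNegMem hP.toAddGroupCone := ⟨hP.mem_or_neg_mem⟩

theorem isAddTorsionFree : IsAddTorsionFree Γ := by
  classical
  let _ : LinearOrder Γ := LinearOrder.mkOfAddGroupCone hP.toAddGroupCone
  have _ : IsOrderedAddMonoid Γ := IsOrderedAddMonoid.mkOfCone hP.toAddGroupCone
  infer_instance

omit hP in
theorem preimage {Q : Set G} (hQ : IsMaxCone Q) {f : Γ →+ G} (hf : Function.Injective f) :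
    IsMaxCone (f ⁻¹' Q) :=
  mk' (fun a ha b hb => by simpa using hQ.add_mem ha hb)
    (fun a => by simpa using hQ.mem_or_neg_mem (f a))
    (fun a ha ha' => hf <| by simpa using hQ.eq_zero_of_mem_of_neg_mem ha (by simpa using ha'))

end IsMaxCone

theorem isMaxCone_nonneg [LinearOrder G] [IsOrderedAddMonoid G] :
    IsMaxCone {x : G | 0 ≤ x} :=
  .mk' (fun _ ha _ hb => add_nonneg ha hb) (fun a => by simpa using le_total 0 a)
    (fun _ ha ha' => le_antisymm (by simpa using ha') ha)

theorem exists_isMaxCone [IsAddTorsionFree Γ] : ∃ P : Set Γ, IsMaxCone P := by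
  let b := Module.Free.chooseBasis ℚ (DivisibleHull Γ)
  let _ : LinearOrder (Module.Free.ChooseBasisIndex ℚ (DivisibleHull Γ)) :=
    IsWellOrder.linearOrder WellOrderingRel
  let f : Γ →+ Lex (_ →₀ ℚ) := (toLexAddEquiv _).toAddMonoidHom.comp
    (b.repr.toAddMonoidHom.comp (DivisibleHull.coeAddMonoidHom Γ))
  have hf : Function.Injective f :=
    (toLexAddEquiv _).injective.comp (b.repr.injective.comp DivisibleHull.coe_injective)
  exact ⟨_, isMaxCone_nonneg.preimage hf⟩

end

/-- An abelian group `Γ` admits an order `P` (a subset with `P + P ⊆ P`,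
`P ∪ (−P) = Γ`, and `P ∩ (−P) = {0}`) if and only if `Γ` is torsion-free. -/
theorem exists_order_iff_torsionFree (Γ : Type*) [AddCommGroup Γ] :
    (∃ P : Set Γ, P + P ⊆ P ∧ P ∪ (-P) = Set.univ ∧ P ∩ (-P) = {0}) ↔
      AddMonoid.IsTorsionFree Γ := by
  rw [AddMonoid.IsTorsionFree, ← isAddTorsionFree_iff_not_isOfFinAddOrder]
  exact ⟨fun ⟨P, hP⟩ => IsMaxCone.isAddTorsionFree (P := P) hP, fun _ => exists_isMaxCone⟩
end

section
/- The only two Lebesgue-measurable orders on the additive group ℝ are [0, ∞) and (−∞, 0]. -/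
/-!
By Steinhaus' theorem, if `E` has positive Haar measure then `E + E` has nonempty interior.
Since `P ∪ -P = ℝ`, the order `P` has positive measure, and `P + P ⊆ P` then makes `P` a
neighbourhood of some `a`; here `a ≠ 0`, because `P ∩ -P = {0}` is not a neighbourhood of `0`.
Say `a > 0`. If `-y ∈ P` for some `y > 0`, then `-w ∈ P` for arbitrarily small `w > 0`
(as `-y = m • (-y / m)`), and translating a ball around `a` inside `P` by a multiple of `-w`
gives a ball around `0` inside `P`, which is impossible. Hence `P = [0, ∞)`; for `a < 0` the
same argument applies to `-P`.
-/

open Pointwise MeasureTheory Set Filter Topology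

section Steinhaus

variable {G : Type*} [AddCommGroup G] [MeasurableSpace G] [MeasurableAdd G] [MeasurableSub₂ G]
  (μ : Measure G) [SFinite μ] [μ.IsAddRightInvariant] {A B : Set G}

theorem lintegral_measure_inter_preimage_sub (hA : MeasurableSet A) (hB : MeasurableSet B) :
    ∫⁻ x, μ (A ∩ (x - ·) ⁻¹' B) ∂μ = μ A * μ B := by
  have hinter (x : G) :
      μ (A ∩ (x - ·) ⁻¹' B) = ∫⁻ y, A.indicator 1 y * B.indicator 1 (x - y) ∂μ := by
    rw [← lintegral_indicator_one (hA.inter (hB.preimage (measurable_const_sub x))),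
      inter_indicator_one]
    rfl
  have hslice (y : G) :
      ∫⁻ x, A.indicator 1 y * B.indicator 1 (x - y) ∂μ = A.indicator 1 y * μ B := by
    rw [lintegral_const_mul (f := fun x ↦ B.indicator 1 (x - y)) _
        ((measurable_one.indicator hB).comp (measurable_sub_const y)),
      lintegral_sub_right_eq_self (B.indicator 1), lintegral_indicator_one hB]
  simp_rw [hinter]
  rw [lintegral_lintegral_swap (by measurability)]
  simp_rw [hslice]
  rw [lintegral_mul_const _ (measurable_one.indicator hA), lintegral_indicator_one hA]

theorem exists_measure_inter_preimage_sub_ne_zero (hA : MeasurableSet A) (hB : MeasurableSet B)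
    (hA₀ : μ A ≠ 0) (hB₀ : μ B ≠ 0) : ∃ x, μ (A ∩ (x - ·) ⁻¹' B) ≠ 0 := by
  by_contra! h
  have := lintegral_measure_inter_preimage_sub μ hA hB
  simp only [h, lintegral_zero] at this
  exact mul_ne_zero hA₀ hB₀ this.symm

end Steinhaus

theorem exists_add_mem_nhds_of_addHaar_pos {G : Type*} [AddCommGroup G] [TopologicalSpace G]
    [IsTopologicalAddGroup G] [LocallyCompactSpace G] [SecondCountableTopology G]
    [MeasurableSpace G] [BorelSpace G] (μ : Measure G) [μ.IsAddHaarMeasure] {A B : Set G}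
    (hA : MeasurableSet A) (hB : MeasurableSet B) (hA₀ : μ A ≠ 0) (hB₀ : μ B ≠ 0) :
    ∃ x, A + B ∈ 𝓝 x := by
  obtain ⟨x, hx⟩ := exists_measure_inter_preimage_sub_ne_zero μ hA hB hA₀ hB₀
  set S := A ∩ (x - ·) ⁻¹' B
  have hS : S - S ∈ 𝓝 0 := Measure.sub_mem_nhds_zero_of_addHaar_pos μ S
    (hA.inter (hB.preimage (measurable_const_sub x))) (pos_iff_ne_zero.2 hx)
  have hSx : S - S + {x} ∈ 𝓝 x := by simpa only [zero_add] using add_singleton_mem_nhds x hS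
  refine ⟨x, mem_of_superset hSx ?_⟩
  rintro _ ⟨_, ⟨s, hs, t, ht, rfl⟩, _, hx', rfl⟩
  rw [mem_singleton_iff.1 hx']
  exact ⟨s, hs.1, x - t, ht.2, by beta_reduce; abel⟩

/-- The positive cone `{x | 0 ≤ x}` of a translation-invariant total order on `G`. -/
structure IsOrderCone {G : Type*} [AddCommGroup G] (P : Set G) : Prop where
  add_subset : P + P ⊆ P
  union_neg : P ∪ -P = univ
  inter_neg : P ∩ -P = {0}

namespace IsOrderCone

variable {G : Type*} [AddCommGroup G] {P : Set G} {x y : G}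

theorem add_mem (hP : IsOrderCone P) (hx : x ∈ P) (hy : y ∈ P) : x + y ∈ P :=
  hP.add_subset (add_mem_add hx hy)

theorem zero_mem (hP : IsOrderCone P) : (0 : G) ∈ P :=
  (hP.inter_neg.ge (mem_singleton 0)).1

theorem mem_or_neg_mem (hP : IsOrderCone P) (x : G) : x ∈ P ∨ -x ∈ P := by
  simpa using hP.union_neg.ge (mem_univ x)

theorem eq_zero_of_mem_of_neg_mem (hP : IsOrderCone P) (hx : x ∈ P) (hnx : -x ∈ P) : x = 0 := by
  simpa using hP.inter_neg.le ⟨hx, hnx⟩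

theorem nsmul_mem (hP : IsOrderCone P) (hx : x ∈ P) (n : ℕ) : n • x ∈ P := by
  induction n with
  | zero => simpa using hP.zero_mem
  | succ n ih => simpa [succ_nsmul] using hP.add_mem ih hx

theorem mem_of_nsmul_mem [IsAddTorsionFree G] (hP : IsOrderCone P) {n : ℕ} (hn : n ≠ 0)
    (hx : n • x ∈ P) : x ∈ P := by
  refine (hP.mem_or_neg_mem x).elim id fun hnx ↦ ?_
  have hx₀ : n • x = 0 := hP.eq_zero_of_mem_of_neg_mem hx (by simpa using hP.nsmul_mem hnx n)
  simpa [(nsmul_eq_zero_iff_right hn).1 hx₀] using hP.zero_mem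

theorem neg (hP : IsOrderCone P) : IsOrderCone (-P) where
  add_subset := by
    rintro _ ⟨x, hx, y, hy, rfl⟩
    simpa [add_comm] using hP.add_mem hx hy
  union_neg := by rw [neg_neg, union_comm, hP.union_neg]
  inter_neg := by rw [neg_neg, inter_comm, hP.inter_neg]

theorem notMem_nhds_zero [TopologicalSpace G] [IsTopologicalAddGroup G]
    [(𝓝[≠] (0 : G)).NeBot] (hP : IsOrderCone P) : P ∉ 𝓝 0 := fun h ↦ by
  have : ({0} : Set G) ∈ 𝓝 0 := hP.inter_neg ▸ inter_mem h (neg_mem_nhds_zero G h)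
  simpa using mem_interior_iff_mem_nhds.2 this

theorem exists_mem_nhds [TopologicalSpace G] [IsTopologicalAddGroup G] [LocallyCompactSpace G]
    [SecondCountableTopology G] [MeasurableSpace G] [BorelSpace G] (hP : IsOrderCone P)
    (μ : Measure G) [μ.IsAddHaarMeasure] (hPm : NullMeasurableSet P μ) : ∃ a, P ∈ 𝓝 a := by
  obtain ⟨E, hEP, hE, hEP_ae⟩ := hPm.exists_measurable_subset_ae_eq
  have hE₀ : μ E ≠ 0 := by
    rw [measure_congr hEP_ae]
    intro hP₀
    have hunion := measure_union_null hP₀ ((measure_neg_null μ).2 hP₀)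
    rw [hP.union_neg] at hunion
    exact Measure.measure_univ_ne_zero.2 (NeZero.ne μ) hunion
  obtain ⟨a, ha⟩ := exists_add_mem_nhds_of_addHaar_pos μ hE hE hE₀ hE₀
  exact ⟨a, mem_of_superset ha ((add_subset_add hEP hEP).trans hP.add_subset)⟩

theorem exists_neg_mem_lt {P : Set ℝ} (hP : IsOrderCone P) {y ε : ℝ} (hy : 0 < y)
    (hyP : -y ∈ P) (hε : 0 < ε) : ∃ w, 0 < w ∧ w < ε ∧ -w ∈ P := by
  obtain ⟨m, hm⟩ := exists_nat_gt (y / ε)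
  have hm₀ : (0 : ℝ) < m := (div_pos hy hε).trans hm
  refine ⟨y / m, div_pos hy hm₀, (div_lt_iff₀ hm₀).2 (by rwa [div_lt_iff₀ hε, mul_comm] at hm), ?_⟩
  refine hP.mem_of_nsmul_mem (n := m) (by exact_mod_cast hm₀.ne') ?_
  rwa [nsmul_eq_mul, mul_neg, mul_div_cancel₀ _ hm₀.ne']

theorem eq_Ici_of_mem_nhds {P : Set ℝ} (hP : IsOrderCone P) {a : ℝ} (ha : 0 < a)
    (hPa : P ∈ 𝓝 a) : P = Ici 0 := by
  obtain ⟨ε, hε, hball⟩ := Metric.mem_nhds_iff.1 hPa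
  have hneg (y : ℝ) (hy : 0 < y) : -y ∉ P := fun hyP ↦ by
    obtain ⟨w, hw, hwε, hwP⟩ := hP.exists_neg_mem_lt hy hyP hε
    set k := ⌊a / w⌋₊
    have hk₁ : k * w ≤ a := (le_div_iff₀ hw).1 (Nat.floor_le (div_nonneg ha.le hw.le))
    have hk₂ : a < k * w + w := by
      have := Nat.lt_floor_add_one (a / w)
      rwa [div_lt_iff₀ hw, add_mul, one_mul] at this
    have hball₀ : Metric.ball 0 (ε - (a - k * w)) ⊆ P := by
      intro z hz
      rw [Metric.mem_ball, dist_zero_right, Real.norm_eq_abs, abs_lt] at hz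
      have hzk : z + k * w ∈ P := hball (by
        rw [Metric.mem_ball, Real.dist_eq, abs_lt]
        constructor <;> linarith)
      simpa using hP.add_mem hzk (hP.nsmul_mem hwP k)
    exact hP.notMem_nhds_zero (mem_of_superset (Metric.ball_mem_nhds 0 (by linarith)) hball₀)
  ext x
  refine ⟨fun hx ↦ not_lt.1 fun hx₀ ↦ hneg (-x) (neg_pos.2 hx₀) (by rwa [neg_neg]), fun hx ↦ ?_⟩
  rcases (mem_Ici.1 hx).eq_or_lt with rfl | hx₀
  · exact hP.zero_mem
  · exact (hP.mem_or_neg_mem x).resolve_right (hneg x hx₀)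

end IsOrderCone

/-- The only two Lebesgue-measurable orders on the additive group `ℝ` are
`[0, ∞)` and `(−∞, 0]`. -/
theorem measurable_order_real (P : Set ℝ)
    (hP1 : P + P ⊆ P) (hP2 : P ∪ (-P) = Set.univ) (hP3 : P ∩ (-P) = {0})
    (hm : NullMeasurableSet P (volume : Measure ℝ)) :
    P = Set.Ici (0 : ℝ) ∨ P = Set.Iic (0 : ℝ) := by
  have hP : IsOrderCone P := ⟨hP1, hP2, hP3⟩
  obtain ⟨a, ha⟩ := hP.exists_mem_nhds volume hm
  rcases lt_trichotomy a 0 with ha₀ | rfl | ha₀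
  · have hnegP : -P ∈ 𝓝 (-a) := continuous_neg.continuousAt.preimage_mem_nhds (by rwa [neg_neg])
    right
    rw [← neg_neg P, hP.neg.eq_Ici_of_mem_nhds (neg_pos.2 ha₀) hnegP, neg_Ici, neg_zero]
  · exact absurd ha hP.notMem_nhds_zero
  · exact Or.inl (hP.eq_Ici_of_mem_nhds ha₀ ha)
end

section
/- The set S = {(x, y) ∈ ℝ² : y² ≤ x} is a T-subset of ℝ², yet there is no nonempty open set W ⊆ ℝ² with W + S ⊆ S. -/
/-! For a compact `K ⊆ S` whose second coordinates are bounded by `M`, every translate by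
`(u, v)` with `v² + 2|v|M < u` stays in `S`, since `(v + y)² ≤ v² + 2|v|M + y² < u + x`. These
translation vectors form an open set having `0` in its closure, so they meet every neighbourhood
of `0`. On the other hand, `(u, v) + S ⊆ S` forces `v = 0`: otherwise `v² + 2vy ≤ u` fails on the
points `(y², y)` of `S` for suitable `y`. So no nonempty open set translates `S` into itself. -/

open Pointwise

/-- A subset `S` of a topological abelian group is a `T`-set if for every compact
`K ⊆ S`, each neighborhood of `0` contains a nonempty open set `W` with `W + K ⊆ S`. -/
def IsTSet {Γ : Type*} [AddCommGroup Γ] [TopologicalSpace Γ] (S : Set Γ) : Prop :=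
  ∀ K : Set Γ, K ⊆ S → IsCompact K → ∀ U ∈ nhds (0 : Γ),
    ∃ W : Set Γ, IsOpen W ∧ W.Nonempty ∧ W ⊆ U ∧ W + K ⊆ S

open Filter Topology

theorem IsTSet.of_forall_isOpen_zero_mem_closure {Γ : Type*} [AddCommGroup Γ] [TopologicalSpace Γ]
    {S : Set Γ}
    (h : ∀ K ⊆ S, IsCompact K → ∃ V : Set Γ, IsOpen V ∧ (0 : Γ) ∈ closure V ∧ V + K ⊆ S) :
    IsTSet S := by
  intro K hKS hK U hU
  obtain ⟨V, hVo, hV0, hVK⟩ := h K hKS hK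
  refine ⟨interior U ∩ V, isOpen_interior.inter hVo, ?_, Set.inter_subset_left.trans
    interior_subset, (Set.add_subset_add_right Set.inter_subset_right).trans hVK⟩
  exact mem_closure_iff.1 hV0 _ isOpen_interior (mem_interior_iff_mem_nhds.2 hU)

def parabola : Set (ℝ × ℝ) := {p | p.2 ^ 2 ≤ p.1}

lemma add_mem_parabola {w p : ℝ × ℝ} {M : ℝ} (hp : p ∈ parabola) (hpM : |p.2| ≤ M)
    (hw : w.2 ^ 2 + 2 * |w.2| * M < w.1) : w + p ∈ parabola := by
  have hcross : 2 * w.2 * p.2 ≤ 2 * |w.2| * M := by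
    calc 2 * w.2 * p.2 ≤ |2 * w.2 * p.2| := le_abs_self _
      _ = 2 * (|w.2| * |p.2|) := by rw [abs_mul, abs_mul, abs_two, mul_assoc]
      _ ≤ 2 * |w.2| * M := by rw [← mul_assoc]; gcongr
  change (w.2 + p.2) ^ 2 ≤ w.1 + p.1
  nlinarith [show p.2 ^ 2 ≤ p.1 from hp]

lemma zero_mem_closure_translates (M : ℝ) :
    (0 : ℝ × ℝ) ∈ closure {w : ℝ × ℝ | w.2 ^ 2 + 2 * |w.2| * M < w.1} := by
  have hlim : Tendsto (fun t : ℝ => (t, (0 : ℝ))) (𝓝[>] 0) (𝓝 0) :=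
    ((continuous_id.prodMk continuous_const).tendsto' 0 0 rfl).mono_left nhdsWithin_le_nhds
  refine mem_closure_of_tendsto hlim (eventually_nhdsWithin_of_forall fun t (ht : 0 < t) => ?_)
  simpa using ht

theorem isTSet_parabola : IsTSet parabola := by
  refine IsTSet.of_forall_isOpen_zero_mem_closure fun K hKS hK => ?_
  obtain ⟨M, hM⟩ := hK.exists_bound_of_continuousOn continuous_snd.continuousOn
  refine ⟨_, isOpen_lt (by fun_prop) continuous_fst, zero_mem_closure_translates M, ?_⟩
  rintro _ ⟨w, hw, p, hp, rfl⟩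
  exact add_mem_parabola (hKS hp) (hM p hp) hw

lemma snd_eq_zero_of_add_parabola_subset {w : ℝ × ℝ} (hw : ∀ p ∈ parabola, w + p ∈ parabola) :
    w.2 = 0 := by
  by_contra hne
  set y := (|w.1| + 1) / (2 * w.2)
  have hy : 2 * w.2 * y = |w.1| + 1 := mul_div_cancel₀ _ (mul_ne_zero two_ne_zero hne)
  have hsum : (w.2 + y) ^ 2 ≤ w.1 + y ^ 2 := hw (y ^ 2, y) (show y ^ 2 ≤ y ^ 2 from le_rfl)
  nlinarith [le_abs_self w.1, sq_nonneg w.2]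

lemma not_exists_isOpen_add_parabola_subset :
    ¬ ∃ W : Set (ℝ × ℝ), IsOpen W ∧ W.Nonempty ∧ W + parabola ⊆ parabola := by
  rintro ⟨W, hWo, hWne, hWS⟩
  have hsnd : Prod.snd '' W = {0} :=
    (hWne.image _).subset_singleton_iff.1 <| Set.image_subset_iff.2 fun w hw =>
      snd_eq_zero_of_add_parabola_subset fun p hp => hWS (Set.add_mem_add hw hp)
  exact not_isOpen_singleton (0 : ℝ) (hsnd ▸ isOpenMap_snd W hWo)

/-- The set `S = {(x, y) ∈ ℝ² : y² ≤ x}` is a `T`-subset of `ℝ²`, yet there is no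
nonempty open set `W ⊆ ℝ²` with `W + S ⊆ S`. -/
theorem isTSet_parabola_and_no_open :
    IsTSet {p : ℝ × ℝ | p.2 ^ 2 ≤ p.1} ∧
      ¬ ∃ W : Set (ℝ × ℝ), IsOpen W ∧ W.Nonempty ∧
        W + {p : ℝ × ℝ | p.2 ^ 2 ≤ p.1} ⊆ {p : ℝ × ℝ | p.2 ^ 2 ≤ p.1} :=
  ⟨isTSet_parabola, not_exists_isOpen_add_parabola_subset⟩
end

section
/- Let X be a Banach space and (x_j) a sequence in X such that there exists a constant c with ‖∑_{j=1}^n ε_j x_j‖ ≤ c for all n and all signs ε_j ∈ {0, ±1}. If X contains no subspace isomorphic to c₀ (e.g., X is weakly sequentially complete, as is any space of measures M(Σ)), then the series ∑ x_j converges unconditionally in norm. -/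
/-!
If `∑ xⱼ` does not converge, the Cauchy criterion fails along disjoint finite blocks
`yₖ = ∑_{j ∈ Fₖ} xⱼ` with `‖yₖ‖ ≥ δ`. Testing the sign bound against a functional `φ` with the
signs of `φ xⱼ` gives `∑ |φ yₖ| ≤ c ‖φ‖`, so `(yₖ)` is weakly null and
`‖∑ tₖ yₖ‖ ≤ c · sup |tₖ|`. A weakly null sequence bounded away from `0` keeps leaving every
finite-dimensional subspace (Mazur), and a gliding hump built on this extracts a subsequence
`zᵢ = y_{kᵢ}` together with functionals `Φᵢ` of norm `≤ 1` that are almost biorthogonal to it. They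
give the lower estimate `‖∑ vᵢ zᵢ‖ ≥ (δ / 6) · sup |vᵢ|`, so `v ↦ ∑ vᵢ zᵢ` embeds `c₀` into `X`.
-/

open Filter Function Topology Metric ZeroAtInfty

/-- `∑ xᵢ` is weakly unconditionally Cauchy with constant `c`. -/
def IsWUC {ι X : Type*} [SeminormedAddCommGroup X] [NormedSpace ℝ X] (c : ℝ) (x : ι → X) :
    Prop :=
  ∀ (φ : StrongDual ℝ X) (s : Finset ι), ∑ i ∈ s, |φ (x i)| ≤ c * ‖φ‖

namespace IsWUC

variable {ι X : Type*} [SeminormedAddCommGroup X] [NormedSpace ℝ X] {c : ℝ} {x : ι → X}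

theorem of_norm_sum_sign_le {x : ℕ → X}
    (hbd : ∀ (n : ℕ) (ε : ℕ → ℝ), (∀ j, ε j = 0 ∨ ε j = 1 ∨ ε j = -1) →
      ‖∑ j ∈ Finset.range n, ε j • x j‖ ≤ c) :
    IsWUC c x := by
  classical
  intro φ s
  obtain ⟨n, hsn⟩ := s.exists_nat_subset_range
  set ε : ℕ → ℝ := fun j => if j ∈ s then (SignType.sign (φ (x j)) : ℝ) else 0
  have hε : ∀ j, ε j = 0 ∨ ε j = 1 ∨ ε j = -1 := by
    intro j
    by_cases hj : j ∈ s
    · simp only [ε, hj, if_true]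
      generalize SignType.sign (φ (x j)) = t
      cases t <;> simp
    · simp [ε, hj]
  calc ∑ j ∈ s, |φ (x j)| = φ (∑ j ∈ Finset.range n, ε j • x j) := by
        simp only [map_sum, map_smul, smul_eq_mul, ε, ite_mul, zero_mul, Finset.sum_ite_mem,
          Finset.inter_eq_right.2 hsn, sign_mul_self]
    _ ≤ ‖φ‖ * ‖∑ j ∈ Finset.range n, ε j • x j‖ := (le_abs_self _).trans (φ.le_opNorm _)
    _ ≤ c * ‖φ‖ := by rw [mul_comm]; gcongr; exact hbd n ε hε

theorem norm_sum_smul_le (hx : IsWUC c x) (hc : 0 ≤ c) (s : Finset ι) {a : ι → ℝ} {M : ℝ}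
    (hM : 0 ≤ M) (ha : ∀ i ∈ s, ‖a i‖ ≤ M) : ‖∑ i ∈ s, a i • x i‖ ≤ M * c := by
  refine NormedSpace.norm_le_dual_bound ℝ _ (by positivity) fun φ => ?_
  calc ‖φ (∑ i ∈ s, a i • x i)‖ ≤ ∑ i ∈ s, ‖a i‖ * |φ (x i)| := by
        simpa only [map_sum, map_smul, smul_eq_mul, norm_mul, Real.norm_eq_abs] using
          norm_sum_le s fun i => a i * φ (x i)
    _ ≤ ∑ i ∈ s, M * |φ (x i)| := by gcongr with i hi; exact ha i hi
    _ ≤ M * c * ‖φ‖ := by rw [← Finset.mul_sum, mul_assoc]; gcongr; exact hx φ s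

theorem norm_le (hx : IsWUC c x) (hc : 0 ≤ c) (i : ι) : ‖x i‖ ≤ c := by
  simpa using hx.norm_sum_smul_le hc {i} (a := 1) zero_le_one (by simp)

theorem comp_injective (hx : IsWUC c x) {κ : Type*} {k : κ → ι} (hk : Injective k) :
    IsWUC c (x ∘ k) := by
  classical
  intro φ s
  simpa [Finset.sum_image hk.injOn] using hx φ (s.image k)

theorem sum_blocks [DecidableEq ι] (hx : IsWUC c x) {κ : Type*} {F : κ → Finset ι}
    (hF : Pairwise (Disjoint on F)) : IsWUC c fun k => ∑ i ∈ F k, x i := by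
  intro φ s
  calc ∑ k ∈ s, |φ (∑ i ∈ F k, x i)| ≤ ∑ k ∈ s, ∑ i ∈ F k, |φ (x i)| := by
        gcongr; rw [map_sum]; exact Finset.abs_sum_le_sum_abs _ _
    _ = ∑ i ∈ s.biUnion F, |φ (x i)| := (Finset.sum_biUnion (hF.set_pairwise _)).symm
    _ ≤ c * ‖φ‖ := hx φ _

theorem tendsto_apply {x : ℕ → X} (hx : IsWUC c x) (φ : StrongDual ℝ X) :
    Tendsto (fun n => φ (x n)) atTop (𝓝 0) := by
  have := (summable_of_sum_range_le (fun n => abs_nonneg _)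
    fun n => hx φ (Finset.range n)).tendsto_atTop_zero
  exact squeeze_zero_norm (fun n => (Real.norm_eq_abs _).le) this

end IsWUC

namespace ZeroAtInftyContinuousMap

theorem norm_coe_le_norm {α β : Type*} [TopologicalSpace α] [SeminormedAddCommGroup β]
    (f : C₀(α, β)) (a : α) : ‖f a‖ ≤ ‖f‖ :=
  f.toBCF.norm_coe_le_norm a

theorem tendsto_atTop_zero (v : C₀(ℕ, ℝ)) : Tendsto v atTop (𝓝 0) :=
  cocompact_eq_atTop (α := ℕ) ▸ zero_at_infty v

end ZeroAtInftyContinuousMap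

theorem exists_pairwise_disjoint_norm_sum_ge_of_not_summable {ι X : Type*} [DecidableEq ι]
    [NormedAddCommGroup X] [CompleteSpace X] {x : ι → X} (hx : ¬Summable x) :
    ∃ δ > 0, ∃ F : ℕ → Finset ι, Pairwise (Disjoint on F) ∧ ∀ k, δ ≤ ‖∑ i ∈ F k, x i‖ := by
  rw [summable_iff_vanishing_norm] at hx
  push Not at hx
  obtain ⟨δ, hδ, hT⟩ := hx
  choose T hTdisj hTnorm using hT
  -- `A k` is the union of the first `k` blocks.
  let A : ℕ → Finset ι := fun k => Nat.rec ∅ (fun _ s => s ∪ T s) k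
  have hA : Monotone A := monotone_nat_of_le_succ fun k => Finset.subset_union_left
  refine ⟨δ, hδ, fun k => T (A k), (pairwise_disjoint_on _).2 fun i j hij => ?_,
    fun k => hTnorm _⟩
  exact ((hTdisj (A j)).mono_right
    ((Finset.subset_union_right : T (A i) ⊆ A (i + 1)).trans (hA hij))).symm

section

variable {X : Type*} [NormedAddCommGroup X] [NormedSpace ℝ X]

namespace IsWUC

variable [CompleteSpace X] {c : ℝ} {x : ℕ → X}

theorem summable_smul (hx : IsWUC c x) (hc : 0 ≤ c) (v : C₀(ℕ, ℝ)) :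
    Summable fun i => v i • x i := by
  refine summable_iff_vanishing_norm.2 fun ε hε => ?_
  have hη : 0 < ε / (c + 1) := by positivity
  obtain ⟨N, hN⟩ := eventually_atTop.1
    (v.tendsto_atTop_zero.norm.eventually (gt_mem_nhds (by simpa using hη)))
  refine ⟨Finset.range N, fun t ht => ?_⟩
  calc ‖∑ i ∈ t, v i • x i‖ ≤ ε / (c + 1) * c :=
        hx.norm_sum_smul_le hc t hη.le fun i hi =>
          (hN i (by simpa using Finset.disjoint_left.1 ht hi)).le
    _ < ε := by rw [div_mul_eq_mul_div, div_lt_iff₀ (by positivity)]; linarith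

theorem exists_c0Map (hx : IsWUC c x) (hc : 0 ≤ c) :
    ∃ T : C₀(ℕ, ℝ) →L[ℝ] X, ∀ v, HasSum (fun i => v i • x i) (T v) := by
  let T : C₀(ℕ, ℝ) →ₗ[ℝ] X :=
    { toFun := fun v => ∑' i, v i • x i
      map_add' := fun v w => by
        simpa [add_smul] using (hx.summable_smul hc v).tsum_add (hx.summable_smul hc w)
      map_smul' := fun a v => by
        simpa [smul_smul] using (hx.summable_smul hc v).tsum_const_smul a }
  refine ⟨T.mkContinuous c fun v => ?_, fun v => (hx.summable_smul hc v).hasSum⟩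
  refine le_of_tendsto' (hx.summable_smul hc v).hasSum.tendsto_sum_nat.norm fun n => ?_
  rw [mul_comm]
  exact hx.norm_sum_smul_le hc _ (norm_nonneg v) fun i _ => v.norm_coe_le_norm i

end IsWUC

theorem Submodule.exists_dual_eq_infDist (E : Submodule ℝ X) (z : X) :
    ∃ φ : StrongDual ℝ X, ‖φ‖ ≤ 1 ∧ φ z = infDist z E ∧ ∀ e ∈ E, φ e = 0 := by
  obtain ⟨g, hg, hgz⟩ := exists_dual_vector'' ℝ (E.mkQL z)
  refine ⟨g.comp E.mkQL, ?_, ?_, fun e he => ?_⟩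
  · refine ContinuousLinearMap.opNorm_le_bound _ zero_le_one fun v => ?_
    calc ‖g (E.mkQL v)‖ ≤ ‖g‖ * ‖E.mkQL v‖ := g.le_opNorm _
      _ ≤ 1 * ‖v‖ := by gcongr; exact Submodule.Quotient.norm_mk_le E v
  · exact hgz.trans (QuotientAddGroup.norm_mk (S := E.toAddSubgroup) z)
  · simp [(Submodule.Quotient.mk_eq_zero E).2 he]

theorem norm_le_of_tendsto_of_weaklyNull {α : Type*} {l : Filter α} [l.NeBot] {y p : α → X}
    {L : X} {r : ℝ} (hr : 0 ≤ r) (hp : Tendsto p l (𝓝 L))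
    (hy : ∀ φ : StrongDual ℝ X, Tendsto (fun n => φ (y n)) l (𝓝 0))
    (hyp : ∀ᶠ n in l, ‖y n - p n‖ ≤ r) : ‖L‖ ≤ r := by
  refine NormedSpace.norm_le_dual_bound ℝ L hr fun φ => ?_
  have hlim : Tendsto (fun n => φ (p n) - φ (y n)) l (𝓝 (φ L)) := by
    simpa using ((φ.continuous.tendsto L).comp hp).sub (hy φ)
  refine le_of_tendsto hlim.norm (hyp.mono fun n hn => ?_)
  calc ‖φ (p n) - φ (y n)‖ = ‖φ (y n - p n)‖ := by rw [map_sub, norm_sub_rev]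
    _ ≤ ‖φ‖ * ‖y n - p n‖ := φ.le_opNorm _
    _ ≤ r * ‖φ‖ := by rw [mul_comm]; gcongr

theorem frequently_le_infDist {y : ℕ → X} (E : Submodule ℝ X) [FiniteDimensional ℝ E]
    {C δ r : ℝ} (hy : ∀ φ : StrongDual ℝ X, Tendsto (fun n => φ (y n)) atTop (𝓝 0))
    (hyC : ∀ n, ‖y n‖ ≤ C) (hyδ : ∀ n, δ ≤ ‖y n‖) (hr : 2 * r < δ) :
    ∃ᶠ n in atTop, r ≤ infDist (y n) E := by
  by_contra! h
  obtain ⟨N, hN⟩ := eventually_atTop.1 h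
  have hr0 : 0 ≤ r := infDist_nonneg.trans (hN N le_rfl).le
  have hnear : ∀ n, ∃ p ∈ closedBall (0 : E) (C + r), N ≤ n → ‖y n - p‖ < r := by
    intro n
    by_cases hn : N ≤ n
    · obtain ⟨p, hpE, hp⟩ := (infDist_lt_iff ⟨0, E.zero_mem⟩).1 (hN n hn)
      refine ⟨⟨p, hpE⟩, ?_, fun _ => by rwa [← dist_eq_norm]⟩
      rw [mem_closedBall_zero_iff, Submodule.coe_norm]
      linarith [norm_le_norm_add_norm_sub' p (y n), hyC n, dist_comm (y n) p,
        dist_eq_norm p (y n)]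
    · exact ⟨0, mem_closedBall_self (by linarith [norm_nonneg (y 0), hyC 0]),
        fun h => (hn h).elim⟩
  choose p hpC hpy using hnear
  obtain ⟨L, -, ψ, hψ, hpL⟩ := tendsto_subseq_of_bounded isBounded_closedBall hpC
  have hψ' := hψ.tendsto_atTop
  have hpL' : Tendsto (fun n => (p (ψ n) : X)) atTop (𝓝 L) :=
    (continuous_subtype_val.tendsto L).comp hpL
  have hnear' : ∀ᶠ n in atTop, ‖y (ψ n) - p (ψ n)‖ < r :=
    hψ'.eventually (eventually_ge_atTop N) |>.mono fun n hn => hpy _ hn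
  have hL : ‖(L : X)‖ ≤ r :=
    norm_le_of_tendsto_of_weaklyNull hr0 hpL' (fun φ => (hy φ).comp hψ')
      (hnear'.mono fun n hn => hn.le)
  have hclose : ∀ᶠ n in atTop, ‖(p (ψ n) : X) - L‖ < δ - 2 * r :=
    (tendsto_iff_norm_sub_tendsto_zero.1 hpL').eventually (gt_mem_nhds (by linarith))
  obtain ⟨n, hn₁, hn₂⟩ := (hnear'.and hclose).exists
  linarith [hyδ (ψ n), norm_le_norm_add_norm_sub' (y (ψ n)) (p (ψ n) : X),
    norm_le_norm_add_norm_sub' (p (ψ n) : X) L]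

section GlidingHump

variable {y : ℕ → X} {C δ r : ℝ}

theorem exists_index_far_from_span
    (hy : ∀ φ : StrongDual ℝ X, Tendsto (fun n => φ (y n)) atTop (𝓝 0))
    (hyC : ∀ n, ‖y n‖ ≤ C) (hyδ : ∀ n, δ ≤ ‖y n‖) (hr : 2 * r < δ)
    (K : Finset ℕ) (G : Finset (StrongDual ℝ X)) {η : ℝ} (hη : 0 < η) :
    ∃ n, (∀ m ∈ K, m < n) ∧ (∀ φ ∈ G, |φ (y n)| ≤ η) ∧
      ∃ φ : StrongDual ℝ X, ‖φ‖ ≤ 1 ∧ r ≤ φ (y n) ∧ ∀ m ∈ K, φ (y m) = 0 := by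
  let E := Submodule.span ℝ (y '' K)
  have : FiniteDimensional ℝ E := FiniteDimensional.span_of_finite ℝ (K.finite_toSet.image y)
  have hK : ∀ᶠ n in atTop, ∀ m ∈ K, m < n :=
    (eventually_all_finset K).2 fun m _ => eventually_gt_atTop m
  have hG : ∀ᶠ n in atTop, ∀ φ ∈ G, |φ (y n)| ≤ η :=
    (eventually_all_finset G).2 fun φ _ =>
      (hy φ).abs.eventually_le_const (by rwa [abs_zero])
  obtain ⟨n, hfar, hnK, hnG⟩ :=
    ((frequently_le_infDist E hy hyC hyδ hr).and_eventually (hK.and hG)).exists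
  obtain ⟨φ, hφ, hφn, hφE⟩ := E.exists_dual_eq_infDist (y n)
  exact ⟨n, hnK, hnG, φ, hφ, hφn ▸ hfar,
    fun m hm => hφE _ (Submodule.subset_span ⟨m, hm, rfl⟩)⟩

theorem exists_strictMono_biorthogonal
    (hy : ∀ φ : StrongDual ℝ X, Tendsto (fun n => φ (y n)) atTop (𝓝 0))
    (hyC : ∀ n, ‖y n‖ ≤ C) (hyδ : ∀ n, δ ≤ ‖y n‖) (hr : 2 * r < δ)
    {ε : ℝ} (hε : 0 < ε) :
    ∃ (k : ℕ → ℕ) (Φ : ℕ → StrongDual ℝ X), StrictMono k ∧ (∀ i, ‖Φ i‖ ≤ 1) ∧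
      (∀ i, r ≤ Φ i (y (k i))) ∧ (∀ i j, i < j → Φ j (y (k i)) = 0) ∧
      (∀ i j, i < j → |Φ i (y (k j))| ≤ ε * (1 / 2) ^ j) := by
  classical
  choose n hnK hnG φ hφ hφn hφK using
    fun (j : ℕ) (S : Finset ℕ × Finset (StrongDual ℝ X)) =>
      exists_index_far_from_span hy hyC hyδ hr S.1 S.2 (η := ε * (1 / 2) ^ j) (by positivity)
  -- `S j` records the indices and functionals chosen before step `j`.
  let S : ℕ → Finset ℕ × Finset (StrongDual ℝ X) :=
    fun j => Nat.rec (∅, ∅) (fun j S => (insert (n j S) S.1, insert (φ j S) S.2)) j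
  let k j := n j (S j)
  let Φ j := φ j (S j)
  have hS : ∀ j, S j = ((Finset.range j).image k, (Finset.range j).image Φ) := by
    intro j
    induction j with
    | zero => rfl
    | succ j ih =>
      change (insert (k j) (S j).1, insert (Φ j) (S j).2) = _
      rw [ih, Finset.range_add_one, Finset.image_insert, Finset.image_insert]
  have hmem : ∀ i j, i < j → k i ∈ (S j).1 ∧ Φ i ∈ (S j).2 := by
    intro i j hij
    rw [hS]
    exact ⟨Finset.mem_image_of_mem _ (Finset.mem_range.2 hij),
      Finset.mem_image_of_mem _ (Finset.mem_range.2 hij)⟩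
  exact ⟨k, Φ, strictMono_nat_of_lt_succ fun j => hnK _ _ _ (hmem j (j + 1) j.lt_succ_self).1,
    fun i => hφ _ _, fun i => hφn _ _, fun i j hij => hφK _ _ _ (hmem i j hij).1,
    fun i j hij => hnG _ _ _ (hmem i j hij).2⟩

end GlidingHump

theorem norm_sum_smul_ge {ι : Type*} [DecidableEq ι] (z : ι → X) {φ : StrongDual ℝ X}
    (hφ : ‖φ‖ ≤ 1) {s : Finset ι} {i : ι} (hi : i ∈ s) {a : ι → ℝ} {M : ℝ}
    (ha : ∀ j ∈ s, ‖a j‖ ≤ M) :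
    ‖a i‖ * φ (z i) - M * ∑ j ∈ s.erase i, |φ (z j)| ≤ ‖∑ j ∈ s, a j • z j‖ := by
  have hrest : |∑ j ∈ s.erase i, a j * φ (z j)| ≤ M * ∑ j ∈ s.erase i, |φ (z j)| := by
    rw [Finset.mul_sum]
    refine (Finset.abs_sum_le_sum_abs _ _).trans (Finset.sum_le_sum fun j hj => ?_)
    rw [abs_mul, ← Real.norm_eq_abs (a j)]
    exact mul_le_mul_of_nonneg_right (ha j (Finset.mem_of_mem_erase hj)) (abs_nonneg _)
  have hsplit : φ (∑ j ∈ s, a j • z j) = a i * φ (z i) + ∑ j ∈ s.erase i, a j * φ (z j) := by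
    simp only [map_sum, map_smul, smul_eq_mul]
    exact (Finset.add_sum_erase s _ hi).symm
  calc ‖a i‖ * φ (z i) - M * ∑ j ∈ s.erase i, |φ (z j)|
      ≤ |a i * φ (z i)| - |∑ j ∈ s.erase i, a j * φ (z j)| := by
        rw [abs_mul, Real.norm_eq_abs]
        gcongr
        exact le_abs_self _
    _ ≤ |φ (∑ j ∈ s, a j • z j)| := by rw [hsplit]; exact abs_sub_abs_le_abs_add _ _
    _ ≤ ‖φ‖ * ‖∑ j ∈ s, a j • z j‖ := φ.le_opNorm _
    _ ≤ ‖∑ j ∈ s, a j • z j‖ := mul_le_of_le_one_left (norm_nonneg _) hφ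

theorem IsWUC.exists_c0_embedding [CompleteSpace X] {c δ : ℝ} {y : ℕ → X} (hy : IsWUC c y)
    (hc : 0 ≤ c) (hδ : 0 < δ) (hyδ : ∀ n, δ ≤ ‖y n‖) :
    ∃ (T : C₀(ℕ, ℝ) →L[ℝ] X) (m : ℝ), 0 < m ∧ ∀ v, m * ‖v‖ ≤ ‖T v‖ := by
  obtain ⟨k, Φ, hk, hΦ, hdiag, hzero, hsmall⟩ :=
    exists_strictMono_biorthogonal hy.tendsto_apply (hy.norm_le hc) hyδ (r := δ / 3)
      (by linarith) (ε := δ / 12) (by positivity)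
  obtain ⟨T, hT⟩ := (hy.comp_injective hk.injective).exists_c0Map hc
  have hoff : ∀ i (s : Finset ℕ), ∑ j ∈ s.erase i, |Φ i (y (k j))| ≤ δ / 6 := by
    intro i s
    have hgeom := summable_geometric_two.mul_left (δ / 12)
    calc ∑ j ∈ s.erase i, |Φ i (y (k j))| ≤ ∑ j ∈ s.erase i, δ / 12 * (1 / 2) ^ j := by
          refine Finset.sum_le_sum fun j hj => ?_
          rcases (Finset.ne_of_mem_erase hj).lt_or_gt with hji | hij
          · rw [hzero j i hji, abs_zero]; positivity
          · exact hsmall i j hij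
      _ ≤ ∑' j, δ / 12 * (1 / 2 : ℝ) ^ j := hgeom.sum_le_tsum _ fun j _ => by positivity
      _ = δ / 6 := by rw [tsum_mul_left, tsum_geometric_two]; ring
  refine ⟨T, δ / 6, by positivity, fun v => ?_⟩
  have hcoord : ∀ i, δ / 3 * ‖v i‖ - δ / 6 * ‖v‖ ≤ ‖T v‖ := by
    intro i
    refine ge_of_tendsto (hT v).tendsto_sum_nat.norm
      ((eventually_gt_atTop i).mono fun n hn => ?_)
    calc δ / 3 * ‖v i‖ - δ / 6 * ‖v‖
        ≤ ‖v i‖ * Φ i (y (k i)) - ‖v‖ * ∑ j ∈ (Finset.range n).erase i, |Φ i (y (k j))| := by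
          rw [mul_comm (δ / 3), mul_comm (δ / 6)]
          gcongr
          exacts [hdiag i, hoff i _]
      _ ≤ _ := norm_sum_smul_ge (y ∘ k) (hΦ i) (Finset.mem_range.2 hn)
          fun j _ => v.norm_coe_le_norm j
  have hv : ‖v‖ ≤ (‖T v‖ + δ / 6 * ‖v‖) / (δ / 3) :=
    (BoundedContinuousFunction.norm_le (by positivity)).2 fun i =>
      (le_div_iff₀ (by positivity)).2 (by linarith [hcoord i] : ‖v i‖ * (δ / 3) ≤ _)
  rw [le_div_iff₀ (by positivity)] at hv
  linarith

end

/-- (Bessaga–Pełczyński)  Let `X` be a complex Banach space and `(x_j)` a sequence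
such that all finite sums `∑ ε_j x_j` with coefficients `ε_j ∈ {0, ±1}` are bounded
in norm by a constant `c` (i.e. the series is weakly unconditionally Cauchy).  If `X`
contains no subspace isomorphic to `c₀`, then `∑ x_j` converges unconditionally in
norm. -/
theorem unconditional_convergence_of_wuc
    {X : Type*} [NormedAddCommGroup X] [NormedSpace ℂ X] [CompleteSpace X]
    (x : ℕ → X) (c : ℝ)
    (hbd : ∀ (n : ℕ) (ε : ℕ → ℝ), (∀ j, ε j = 0 ∨ ε j = 1 ∨ ε j = -1) →
      ‖∑ j ∈ Finset.range n, ε j • x j‖ ≤ c)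
    (hc0 : ¬ ∃ (f : ZeroAtInftyContinuousMap ℕ ℝ →L[ℝ] X) (m : ℝ), 0 < m ∧
      ∀ v, m * ‖v‖ ≤ ‖f v‖) :
    Summable x := by
  by_contra hx
  obtain ⟨δ, hδ, F, hF, hFδ⟩ := exists_pairwise_disjoint_norm_sum_ge_of_not_summable hx
  have hc : 0 ≤ c := by simpa using hbd 0 0 fun _ => Or.inl rfl
  exact hc0 (((IsWUC.of_norm_sum_sign_le hbd).sum_blocks hF).exists_c0_embedding hc hδ hFδ)
end
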